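/- arXiv:2405.01169 — 2 statements merged into one kernel-verified Lean document; each statement's English description precedes it below -/
import Mathlib

section
/- The collection of subsets of Th(T) of the form Z(E), for E a full subcategory of T, forms the closed sets of a topology on Th(T) (the Zariski topology on thick subcategories). -/
/-!
STATEMENT 3: The subsets Z(E) of Th(T) are the closed sets of a topology (the Zariski topology) on Th(T).
-/

open CategoryTheory CategoryTheory.Limits CategoryTheory.Pretriangulated ZeroObject

/-- A thick subcategory of a (pre)triangulated category, modeled by its class of objects:
closed under isomorphisms, containing the zero object, closed under shifts, extensions
(distinguished triangles) and direct summands. -/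
structure ThickSubcategory (C : Type*) [Category C] [HasZeroObject C] [HasShift C ℤ]
    [Preadditive C] [∀ n : ℤ, (CategoryTheory.shiftFunctor C n).Additive]
    [Pretriangulated C] [HasBinaryBiproducts C] where
  set : Set C
  zero_mem : (0 : C) ∈ set
  isoClosed : ∀ {X Y : C}, (X ≅ Y) → X ∈ set → Y ∈ set
  shift_mem : ∀ (X : C), X ∈ set → ∀ n : ℤ, (X⟦n⟧ : C) ∈ set
  ext_mem : ∀ T ∈ distTriang C, T.obj₁ ∈ set → T.obj₂ ∈ set → T.obj₃ ∈ set
  summand_mem : ∀ (X Y : C), (X ⊞ Y) ∈ set → X ∈ set ∧ Y ∈ set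

variable (C : Type*) [Category C] [HasZeroObject C] [HasShift C ℤ]
    [Preadditive C] [∀ n : ℤ, (CategoryTheory.shiftFunctor C n).Additive]
    [Pretriangulated C] [HasBinaryBiproducts C]

/-- `Z(E)` : the set of thick subcategories whose object class is disjoint from `E`. -/
def Z (E : Set C) : Set (ThickSubcategory C) := {T | T.set ∩ E = ∅}

/-!
As for the Zariski topology on a prime spectrum: `Z` turns unions of object sets into
intersections, `Z(T) = ∅` since every thick subcategory contains `0`, and
`Z(E) ∪ Z(F) = Z({X ⊞ Y | X ∈ E, Y ∈ F})` because a thick subcategory contains `X ⊞ Y`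
exactly when it contains both `X` and `Y`.
-/

variable {C}

namespace ThickSubcategory

theorem biprod_mem (S : ThickSubcategory C) {X Y : C} (hX : X ∈ S.set) (hY : Y ∈ S.set) :
    (X ⊞ Y) ∈ S.set :=
  S.ext_mem _ (inv_rot_of_distTriang _ (binaryBiproductTriangle_distinguished X Y))
    (S.shift_mem _ hY (-1)) hX

theorem biprod_mem_iff (S : ThickSubcategory C) {X Y : C} :
    (X ⊞ Y) ∈ S.set ↔ X ∈ S.set ∧ Y ∈ S.set :=
  ⟨S.summand_mem X Y, fun h => S.biprod_mem h.1 h.2⟩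

end ThickSubcategory

theorem mem_Z_iff {E : Set C} {S : ThickSubcategory C} : S ∈ Z C E ↔ ∀ X ∈ E, X ∉ S.set := by
  simp only [Z, Set.mem_ofPred_eq, Set.eq_empty_iff_forall_notMem, Set.mem_inter_iff, not_and']

theorem Z_univ : Z C Set.univ = ∅ :=
  Set.eq_empty_of_forall_notMem fun S hS => mem_Z_iff.mp hS 0 trivial S.zero_mem

theorem Z_sUnion (𝓔 : Set (Set C)) : Z C (⋃₀ 𝓔) = ⋂ E ∈ 𝓔, Z C E := by
  ext S
  simp only [mem_Z_iff, Set.mem_sUnion, Set.mem_iInter]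
  grind

theorem Z_union_Z (E F : Set C) : Z C E ∪ Z C F = Z C (Set.image2 (· ⊞ ·) E F) := by
  ext S
  simp only [Set.mem_union, mem_Z_iff, Set.forall_mem_image2, S.biprod_mem_iff, not_and_or]
  grind

instance ThickSubcategory.zariskiTopology : TopologicalSpace (ThickSubcategory C) :=
  TopologicalSpace.ofClosed (Set.range (Z C)) ⟨Set.univ, Z_univ⟩
    (fun 𝒵 h𝒵 => by
      rw [← Set.image_preimage_eq_of_subset h𝒵, Set.sInter_image, ← Z_sUnion]
      exact Set.mem_range_self _)
    (by
      rintro _ ⟨E, rfl⟩ _ ⟨F, rfl⟩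
      exact ⟨_, (Z_union_Z E F).symm⟩)

theorem isClosed_iff_exists_eq_Z (s : Set (ThickSubcategory C)) :
    IsClosed s ↔ ∃ E : Set C, s = Z C E := by
  rw [← isOpen_compl_iff]
  change sᶜᶜ ∈ Set.range (Z C) ↔ _
  simp only [compl_compl, Set.mem_range, eq_comm]

variable (C)

/-- The sets of the form `Z(E)` form the closed sets of a topology on `Th(T)`. -/
theorem exists_topology_closed_iff_Z :
    ∃ t : TopologicalSpace (ThickSubcategory C),
      ∀ s : Set (ThickSubcategory C), (@IsClosed _ t s) ↔ ∃ E : Set C, s = Z C E :=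
  ⟨inferInstance, isClosed_iff_exists_eq_Z⟩
end

section
/- Let T be a triangulated category admitting a split generator G. Then for any thick subcategory U with U ≠ T, there exists a maximal thick subcategory of T containing U. In particular, T has at least one maximal (hence prime) thick subcategory. -/
/-!
STATEMENT 9: If T has a split generator G, then every proper thick subcategory U is contained in a maximal thick subcategory; in particular T has a maximal thick subcategory.
-/

open CategoryTheory CategoryTheory.Limits CategoryTheory.Pretriangulated ZeroObject

variable (C : Type*) [Category C] [HasZeroObject C] [HasShift C ℤ]
    [Preadditive C] [∀ n : ℤ, (CategoryTheory.shiftFunctor C n).Additive]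
    [Pretriangulated C] [HasBinaryBiproducts C]



/-- If the smallest thick subcategory containing `G` is all of `T` (i.e. `G` is a split
generator), then every proper thick subcategory is contained in a maximal one. -/
theorem exists_maximal_thick_containing
    (G : C) (hG : ∀ M : ThickSubcategory C, G ∈ M.set → M.set = Set.univ)
    (U : ThickSubcategory C) (hU : U.set ≠ Set.univ) :
    ∃ M : ThickSubcategory C, U.set ⊆ M.set ∧ M.set ≠ Set.univ ∧
      ∀ N : ThickSubcategory C, M.set ⊆ N.set → N.set = M.set ∨ N.set = Set.univ := by
  classical
  -- G ∉ M.set ↔ M proper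
  have hGiff : ∀ M : ThickSubcategory C, (M.set ≠ Set.univ ↔ G ∉ M.set) := by
    intro M
    constructor
    · intro h hG'; exact h (hG M hG')
    · intro h h'; exact h (h' ▸ Set.mem_univ G)
  set S : Set (Set C) :=
    { s | ∃ M : ThickSubcategory C, M.set = s ∧ U.set ⊆ s ∧ G ∉ s } with hS
  have hUS : U.set ∈ S := ⟨U, rfl, subset_rfl, (hGiff U).1 hU⟩
  have hchainUB : ∀ c ⊆ S, IsChain (· ⊆ ·) c → c.Nonempty →
      ∃ ub ∈ S, ∀ s ∈ c, s ⊆ ub := by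
    rintro c hcS hchain ⟨s₀, hs₀⟩
    -- union of the chain
    have key : ∀ s ∈ c, ∃ M : ThickSubcategory C, M.set = s := by
      intro s hs; obtain ⟨M, h1, _, _⟩ := hcS hs; exact ⟨M, h1⟩
    have hmem : ∀ {X : C} {s}, s ∈ c → X ∈ s → X ∈ ⋃₀ c := by
      intro X s hs hX; exact ⟨s, hs, hX⟩
    refine ⟨⋃₀ c, ⟨⟨⋃₀ c, ?_, ?_, ?_, ?_, ?_⟩, rfl, ?_, ?_⟩, fun s hs => Set.subset_sUnion_of_mem hs⟩
    · obtain ⟨M, hM⟩ := key s₀ hs₀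
      exact hmem hs₀ (hM ▸ M.zero_mem)
    · rintro X Y e ⟨s, hs, hX⟩
      obtain ⟨M, hM⟩ := key s hs
      exact hmem hs (hM ▸ M.isoClosed e (hM ▸ hX))
    · rintro X ⟨s, hs, hX⟩ n
      obtain ⟨M, hM⟩ := key s hs
      exact hmem hs (hM ▸ M.shift_mem X (hM ▸ hX) n)
    · rintro T hT ⟨s₁, hs₁, h₁⟩ ⟨s₂, hs₂, h₂⟩
      rcases hchain.total hs₁ hs₂ with h | h
      · obtain ⟨M, hM⟩ := key s₂ hs₂
        exact hmem hs₂ (hM ▸ M.ext_mem T hT (hM ▸ h h₁) (hM ▸ h₂))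
      · obtain ⟨M, hM⟩ := key s₁ hs₁
        exact hmem hs₁ (hM ▸ M.ext_mem T hT (hM ▸ h₁) (hM ▸ h h₂))
    · rintro X Y ⟨s, hs, hXY⟩
      obtain ⟨M, hM⟩ := key s hs
      obtain ⟨h1, h2⟩ := M.summand_mem X Y (hM ▸ hXY)
      exact ⟨hmem hs (hM ▸ h1), hmem hs (hM ▸ h2)⟩
    · obtain ⟨_, _, hUs, _⟩ := hcS hs₀
      exact hUs.trans (Set.subset_sUnion_of_mem hs₀)
    · rintro ⟨s, hs, hGs⟩
      obtain ⟨_, _, _, hGn⟩ := hcS hs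
      exact hGn hGs
  obtain ⟨m, hUm, hmS, hmax⟩ := zorn_subset_nonempty S hchainUB U.set hUS
  · obtain ⟨M, hMm, hUM, hGm⟩ := hmS
    refine ⟨M, hMm ▸ hUm, (hGiff M).2 (hMm ▸ hGm), ?_⟩
    intro N hMN
    by_cases hGN : G ∈ N.set
    · exact Or.inr (hG N hGN)
    · left
      rw [hMm]
      exact le_antisymm (hmax ⟨N, rfl, hUm.trans (hMm ▸ hMN), hGN⟩ (hMm ▸ hMN)) (hMm ▸ hMN)
end
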